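/- Let Q be a quad in a binary matroid M. If x and y are elements of Q, then M\x and M\y are isomorphic matroids. -/

import Mathlib

open scoped Matroid

universe u v

namespace Matroid

variable {α : Type u} {β : Type v}

/-- Deletion of a set of elements from a matroid. -/
def Del (M : Matroid α) (D : Set α) : Matroid α := M ↾ (M.E \ D)

/-- Contraction of a set of elements in a matroid. -/
def Con (M : Matroid α) (C : Set α) : Matroid α := (M✶.Del C)✶

/-- A circuit is a minimal dependent set. -/
def IsCircuitM (M : Matroid α) (C : Set α) : Prop :=
  M.Dep C ∧ ∀ ⦃D : Set α⦄, D ⊂ C → M.Indep D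

/-- A cocircuit is a circuit of the dual matroid. -/
def IsCocircuitM (M : Matroid α) (C : Set α) : Prop := M✶.IsCircuitM C

/-- A triangle is a 3-element circuit. -/
def IsTriangle (M : Matroid α) (T : Set α) : Prop := M.IsCircuitM T ∧ T.encard = 3

/-- A triad is a 3-element cocircuit. -/
def IsTriad (M : Matroid α) (T : Set α) : Prop := M.IsCocircuitM T ∧ T.encard = 3

/-- A quad is a 4-element set that is both a circuit and a cocircuit. -/
def IsQuad (M : Matroid α) (Q : Set α) : Prop :=
  M.IsCircuitM Q ∧ M.IsCocircuitM Q ∧ Q.encard = 4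

/-- The rank (in `ℕ∞`) of a set in a matroid: the supremum of the cardinalities
of independent subsets of the set. -/
noncomputable def eRkM (M : Matroid α) (X : Set α) : ℕ∞ :=
  ⨆ I ∈ {I : Set α | M.Indep I ∧ I ⊆ X}, I.encard

/-- `M.ConnBddBy X k` says that the connectivity `λ_M(X) = r(X) + r(E − X) − r(M)`
is at most `k`, phrased without subtraction. -/
def ConnBddBy (M : Matroid α) (X : Set α) (k : ℕ) : Prop :=
  M.eRkM X + M.eRkM (M.E \ X) ≤ M.eRkM M.E + (k : ℕ∞)

/-- `(X, Y)` is a `k`-separation of `M`: a partition of the ground set with both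
sides of size at least `k` and `λ_M(X) ≤ k − 1`. -/
def IsKSep (M : Matroid α) (k : ℕ) (X Y : Set α) : Prop :=
  Disjoint X Y ∧ X ∪ Y = M.E ∧ (k : ℕ∞) ≤ X.encard ∧ (k : ℕ∞) ≤ Y.encard ∧
    M.ConnBddBy X (k - 1)

/-- A matroid is `n`-connected if it has no `k`-separation for any `k < n`. -/
def NConnected (M : Matroid α) (n : ℕ) : Prop :=
  ∀ k : ℕ, 0 < k → k < n → ∀ X Y : Set α, ¬ M.IsKSep k X Y

/-- A matroid is 3-connected if it has no 1- or 2-separation. -/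
def ThreeConnected (M : Matroid α) : Prop := M.NConnected 3

/-- A matroid is 4-connected if it has no 1-, 2- or 3-separation. -/
def FourConnected (M : Matroid α) : Prop := M.NConnected 4

/-- A matroid is `(4, k)`-connected if it is 3-connected and every 3-separation
has a side with at most `k` elements. -/
def FourKConnected (M : Matroid α) (k : ℕ) : Prop :=
  M.ThreeConnected ∧ ∀ X Y : Set α, M.IsKSep 3 X Y →
    X.encard ≤ (k : ℕ∞) ∨ Y.encard ≤ (k : ℕ∞)

/-- A matroid is internally 4-connected if it is (4, 3)-connected. -/
def InternallyFourConnected (M : Matroid α) : Prop := M.FourKConnected 3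

/-- A `(4, 3)`-violator is a 3-separation with both sides of size at least 4. -/
def Violator43 (M : Matroid α) (X Y : Set α) : Prop :=
  M.IsKSep 3 X Y ∧ (4 : ℕ∞) ≤ X.encard ∧ (4 : ℕ∞) ≤ Y.encard

/-- Two matroids are isomorphic if there is a bijection between their ground sets
carrying independent sets to independent sets in both directions. -/
def IsIsoTo (M : Matroid α) (N : Matroid β) : Prop :=
  ∃ e : M.E ≃ N.E, ∀ I : Set M.E,
    M.Indep (Subtype.val '' I) ↔ N.Indep (Subtype.val '' (e '' I))

/-- `N` is a minor of `M` if it is obtained from `M` by contracting a set and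
deleting a disjoint set. -/
def IsMinorOf (N M : Matroid α) : Prop :=
  ∃ C D : Set α, Disjoint C D ∧ C ⊆ M.E ∧ D ⊆ M.E ∧ N = (M.Con C).Del D

/-- `M` has an `N`-minor: a minor of `M` isomorphic to `N`. -/
def HasIsoMinor (M : Matroid α) (N : Matroid β) : Prop :=
  ∃ M₀ : Matroid α, M₀.IsMinorOf M ∧ M₀.IsIsoTo N

/-- `M` has a proper `N`-minor: a proper minor of `M` isomorphic to `N`. -/
def HasProperIsoMinor (M : Matroid α) (N : Matroid β) : Prop :=
  ∃ M₀ : Matroid α, M₀.IsMinorOf M ∧ M₀ ≠ M ∧ M₀.IsIsoTo N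

/-- A matroid is binary if it is representable over `GF(2)`. -/
def IsBinary (M : Matroid α) : Prop :=
  ∃ (ι : Type u) (v : α → ι → ZMod 2), ∀ I : Set α,
    M.Indep I ↔ I ⊆ M.E ∧ LinearIndependent (ZMod 2) (fun x : I => v x)

/-- A 4-fan: an ordering `(a, b, c, d)` of a 4-element set with `{a,b,c}` a
triangle and `{b,c,d}` a triad. -/
def Is4FanOrdering (M : Matroid α) (a b c d : α) : Prop :=
  ({a, b, c, d} : Set α).encard = 4 ∧
    M.IsTriangle {a, b, c} ∧ M.IsTriad {b, c, d}

/-- A 5-fan: an ordering of a 5-element set whose alternating sequence contains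
two triangles. -/
def Is5FanOrdering (M : Matroid α) (a b c d e : α) : Prop :=
  ({a, b, c, d, e} : Set α).encard = 5 ∧
    M.IsTriangle {a, b, c} ∧ M.IsTriad {b, c, d} ∧ M.IsTriangle {c, d, e}

/-- A 5-cofan: an ordering of a 5-element set whose alternating sequence contains
two triads. -/
def Is5CofanOrdering (M : Matroid α) (a b c d e : α) : Prop :=
  ({a, b, c, d, e} : Set α).encard = 5 ∧
    M.IsTriad {a, b, c} ∧ M.IsTriangle {b, c, d} ∧ M.IsTriad {c, d, e}

/-- A fan ordering `(s 0, …, s (n-1))`: the consecutive triples form an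
alternating sequence of triangles and triads. -/
def IsFanOrdering (M : Matroid α) (n : ℕ) (s : ℕ → α) : Prop :=
  3 ≤ n ∧ Set.InjOn s (Set.Iio n) ∧
    ((∀ i : ℕ, i + 3 ≤ n →
        (Even i → M.IsTriangle {s i, s (i + 1), s (i + 2)}) ∧
        (¬ Even i → M.IsTriad {s i, s (i + 1), s (i + 2)})) ∨
     (∀ i : ℕ, i + 3 ≤ n →
        (Even i → M.IsTriad {s i, s (i + 1), s (i + 2)}) ∧
        (¬ Even i → M.IsTriangle {s i, s (i + 1), s (i + 2)})))

/-- The counterexample hypotheses on a pair `(M, N)`. -/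
def CexHyp (M : Matroid α) (N : Matroid β) : Prop :=
  M.IsBinary ∧ N.IsBinary ∧
  M.InternallyFourConnected ∧ N.InternallyFourConnected ∧
  M.HasProperIsoMinor N ∧
  (8 : ℕ∞) ≤ N.E.encard ∧ (11 : ℕ∞) ≤ M.E.encard ∧
  (∀ T : Set α, M.IsTriangle T → ∀ e ∈ T, ¬ (M.Del {e}).HasIsoMinor N) ∧
  (∀ T : Set α, M.IsTriad T → ∀ e ∈ T, ¬ (M.Con {e}).HasIsoMinor N) ∧
  ¬ ∃ M' : Matroid α, M'.IsMinorOf M ∧ M'.InternallyFourConnected ∧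
      M'.HasIsoMinor N ∧
      M'.E.encard + 1 ≤ M.E.encard ∧ M.E.encard ≤ M'.E.encard + 2

end Matroid

open Matroid

/-!
Represent `M` over `GF(2)` by `v` and write the quad as `{x, y, a, b}`. As a circuit it satisfies
`v x + v y + v a + v b = 0`; as a cocircuit it is the set of elements on which some linear
functional `f` does not vanish. The transvection `u ↦ u + f u • (v x + v y)` therefore swaps
`v x` with `v y` and `v a` with `v b` and fixes every other `v e`, so the permutation `(x y)(a b)`
is an automorphism of `M`; it carries `M \ x` onto `M \ y`.
-/

open Set Submodule Module

lemma ZMod.eq_one_of_ne_zero_two {c : ZMod 2} (hc : c ≠ 0) : c = 1 := by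
  revert c
  decide

theorem Set.exists_eq_insert_insert_pair_of_encard_eq_four {α : Type*} {Q : Set α}
    (hQ : Q.encard = 4) {x y : α} (hx : x ∈ Q) (hy : y ∈ Q) (hxy : x ≠ y) :
    ∃ a b, a ≠ b ∧ a ≠ x ∧ a ≠ y ∧ b ≠ x ∧ b ≠ y ∧ Q = {x, y, a, b} := by
  have h2 : (Q \ {x, y}).encard = 2 := by
    have h := encard_sdiff_add_encard_of_subset (pair_subset hx hy)
    rw [encard_pair hxy, hQ] at h
    exact ENat.add_left_injective_of_ne_top (by simp) (h.trans (by norm_num))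
  obtain ⟨a, b, hab, hQab⟩ := encard_eq_two.1 h2
  have ha : a ∈ Q \ {x, y} := hQab ▸ mem_insert _ _
  have hb : b ∈ Q \ {x, y} := hQab ▸ mem_insert_of_mem _ rfl
  simp only [mem_sdiff, mem_insert_iff, mem_singleton_iff, not_or] at ha hb
  refine ⟨a, b, hab, ha.2.1, ha.2.2, hb.2.1, hb.2.2, ?_⟩
  rw [← union_sdiff_cancel (pair_subset hx hy), hQab, insert_union, singleton_union]

namespace Matroid

variable {α β W : Type*} [AddCommGroup W]

def IsRep (M : Matroid α) (K : Type*) [Field K] [Module K W] (v : α → W) : Prop :=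
  ∀ I : Set α, M.Indep I ↔ I ⊆ M.E ∧ LinearIndepOn K v I

def IsAutomorphism (M : Matroid α) (σ : α ≃ α) : Prop :=
  σ '' M.E = M.E ∧ ∀ I : Set α, M.Indep (σ '' I) ↔ M.Indep I

lemma IsIsoTo.refl (M : Matroid α) : M.IsIsoTo M :=
  ⟨Equiv.refl M.E, fun I => by simp⟩

lemma isIsoTo_of_equiv {M : Matroid α} {N : Matroid β} (σ : α ≃ β)
    (hE : ∀ e, σ e ∈ N.E ↔ e ∈ M.E) (hI : ∀ I ⊆ M.E, N.Indep (σ '' I) ↔ M.Indep I) :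
    M.IsIsoTo N := by
  refine ⟨σ.subtypeEquiv fun e => (hE e).symm, fun I => ?_⟩
  rw [image_image, ← hI _ (Subtype.coe_image_subset _ _), image_image]
  rfl

lemma IsAutomorphism.isIsoTo_del {M : Matroid α} {σ : α ≃ α} (hσ : M.IsAutomorphism σ)
    (D : Set α) : (M.Del D).IsIsoTo (M.Del (σ '' D)) := by
  have hmem : ∀ e, σ e ∈ M.E ↔ e ∈ M.E := fun e => by
    conv_lhs => rw [← hσ.1]
    exact σ.injective.mem_set_image
  refine isIsoTo_of_equiv σ (fun e => ?_) (fun I hI => ?_)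
  · simp only [Del, restrict_ground_eq, mem_sdiff, hmem, σ.injective.mem_set_image]
  · have hσI : σ '' I ⊆ M.E \ σ '' D := by
      rintro _ ⟨e, he, rfl⟩
      exact ⟨(hmem e).2 (hI he).1, σ.injective.mem_set_image.not.2 (hI he).2⟩
    have hID : I ⊆ M.E \ D := hI
    simp only [Del, restrict_indep_iff, hσ.2, and_iff_left hσI, and_iff_left hID]

namespace IsRep

section Field

variable {K : Type*} [Field K] [Module K W] {M : Matroid α} {v : α → W}

lemma image_subset_span_of_isBasis (hv : M.IsRep K v) {I X : Set α} (hI : M.IsBasis I X) :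
    v '' X ⊆ span K (v '' I) := by
  rintro _ ⟨e, heX, rfl⟩
  by_cases heI : e ∈ I
  · exact subset_span (mem_image_of_mem v heI)
  by_contra hspan
  exact (hI.insert_dep ⟨heX, heI⟩).not_indep <| (hv _).2
    ⟨insert_subset (hI.subset_ground heX) hI.indep.subset_ground,
      (linearIndepOn_insert heI).2 ⟨((hv I).1 hI.indep).2, hspan⟩⟩

lemma spanning_iff (hv : M.IsRep K v) {X : Set α} (hX : X ⊆ M.E) :
    M.Spanning X ↔ v '' M.E ⊆ span K (v '' X) := by
  refine ⟨fun hXs => ?_, fun hspan => ?_⟩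
  · obtain ⟨B, hB, hBX⟩ := hXs.exists_isBase_subset
    exact (hv.image_subset_span_of_isBasis (isBasis_ground_iff.2 hB)).trans
      (span_mono (image_mono hBX))
  obtain ⟨I, hI⟩ := M.exists_isBasis X
  have hXI : span K (v '' X) ≤ span K (v '' I) := span_le.2 (hv.image_subset_span_of_isBasis hI)
  refine hI.spanning_iff_spanning.1 (IsBase.spanning (hI.indep.isBase_of_forall_insert ?_))
  rintro e ⟨heE, heI⟩ hins
  exact ((linearIndepOn_insert heI).1 ((hv _).1 hins).2).2
    (hXI (hspan (mem_image_of_mem v heE)))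

lemma image_ground_subset_span_insert_of_isCocircuitM (hv : M.IsRep K v) {C : Set α}
    (hC : M.IsCocircuitM C) {z : α} (hz : z ∈ C) :
    v '' M.E ⊆ span K (insert (v z) (v '' (M.E \ C))) := by
  have hcompl : M.Spanning (M.E \ (C \ {z})) :=
    Coindep.compl_spanning (hC.2 (sdiff_singleton_ssubset.2 hz))
  refine ((hv.spanning_iff sdiff_subset).1 hcompl).trans (span_mono ?_)
  rintro _ ⟨e, ⟨heE, he⟩, rfl⟩
  obtain rfl | hez := eq_or_ne e z
  · exact mem_insert _ _
  exact mem_insert_of_mem _ ⟨e, ⟨heE, fun heC => he ⟨heC, hez⟩⟩, rfl⟩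

lemma notMem_span_compl_of_isCocircuitM (hv : M.IsRep K v) {C : Set α}
    (hC : M.IsCocircuitM C) {z : α} (hz : z ∈ C) :
    v z ∉ span K (v '' (M.E \ C)) := by
  intro hzspan
  refine hC.1.not_indep ((coindep_iff_compl_spanning (M := M) hC.1.subset_ground).2 ?_)
  rw [hv.spanning_iff sdiff_subset, ← span_insert_eq_span hzspan]
  exact hv.image_ground_subset_span_insert_of_isCocircuitM hC hz

lemma exists_dual_of_isCocircuitM (hv : M.IsRep K v) {C : Set α} (hC : M.IsCocircuitM C) :
    ∃ f : Dual K W, ∀ e ∈ M.E, f (v e) ≠ 0 ↔ e ∈ C := by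
  obtain ⟨z, hz⟩ := hC.1.nonempty
  obtain ⟨f, hfz, hf⟩ := exists_le_ker_of_notMem (hv.notMem_span_compl_of_isCocircuitM hC hz)
  refine ⟨f, fun e he => ⟨fun hfe => ?_, fun heC => ?_⟩⟩
  · by_contra heC
    exact hfe (hf (subset_span ⟨e, ⟨he, heC⟩, rfl⟩))
  obtain ⟨c, w, hw, hve⟩ :=
    mem_span_insert.1 (hv.image_ground_subset_span_insert_of_isCocircuitM hC hz ⟨e, he, rfl⟩)
  have hc : c ≠ 0 := by
    rintro rfl
    rw [zero_smul, zero_add] at hve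
    exact hv.notMem_span_compl_of_isCocircuitM hC heC (hve ▸ hw)
  rw [hve, map_add, map_smul, LinearMap.mem_ker.1 (hf hw), add_zero, smul_eq_mul]
  exact mul_ne_zero hc hfz

lemma exists_sum_smul_eq_zero_of_isCircuitM (hv : M.IsRep K v) {C : Finset α}
    (hC : M.IsCircuitM C) : ∃ g : α → K, (∀ e ∈ C, g e ≠ 0) ∧ ∑ e ∈ C, g e • v e = 0 := by
  classical
  obtain ⟨g, hg, i, hi, hgi⟩ := not_linearIndepOn_finset_iff.1 fun hind =>
    hC.1.not_indep ((hv _).2 ⟨hC.1.subset_ground, hind⟩)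
  refine ⟨g, fun j hj hgj => hgi ?_, hg⟩
  have hind : LinearIndepOn K v ↑(C.erase j) :=
    ((hv _).1 (hC.2 (Finset.coe_ssubset.2 (Finset.erase_ssubset hj)))).2
  refine linearIndepOn_finset_iff.1 hind g ?_ i (Finset.mem_erase.2 ⟨?_, hi⟩)
  · rwa [Finset.sum_erase C (by rw [hgj, zero_smul])]
  · rintro rfl
    exact hgi hgj

lemma isAutomorphism_of_linearEquiv (hv : M.IsRep K v) (T : W ≃ₗ[K] W) {σ : α ≃ α}
    (hσE : σ '' M.E = M.E) (hσ : ∀ e ∈ M.E, v (σ e) = T (v e)) : M.IsAutomorphism σ := by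
  refine ⟨hσE, fun I => ?_⟩
  rw [hv, hv, ← hσE, image_subset_image_iff σ.injective, hσE]
  refine and_congr_right fun hI => ?_
  rw [← linearIndepOn_equiv,
    linearIndepOn_congr (v := v ∘ σ) (w := T ∘ v) fun e he => hσ e (hI he)]
  exact T.toLinearMap.linearIndepOn_iff_of_injOn T.injective.injOn

end Field

variable [Module (ZMod 2) W] {M : Matroid α} {v : α → W}

lemma sum_eq_zero_of_isCircuitM (hv : M.IsRep (ZMod 2) v) {C : Finset α} (hC : M.IsCircuitM C) :
    ∑ e ∈ C, v e = 0 := by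
  obtain ⟨g, hg, hsum⟩ := hv.exists_sum_smul_eq_zero_of_isCircuitM hC
  rwa [Finset.sum_congr rfl fun e he => by rw [ZMod.eq_one_of_ne_zero_two (hg e he), one_smul]]
    at hsum

lemma isAutomorphism_swap_mul_swap_of_isQuad [DecidableEq α] (hv : M.IsRep (ZMod 2) v)
    {x y a b : α} (hQ : M.IsQuad {x, y, a, b}) (hxy : x ≠ y) (hab : a ≠ b)
    (hax : a ≠ x) (hay : a ≠ y) (hbx : b ≠ x) (hby : b ≠ y) :
    M.IsAutomorphism (Equiv.swap a b * Equiv.swap x y) := by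
  obtain ⟨hC, hCc, -⟩ := hQ
  have hQE : {x, y, a, b} ⊆ M.E := hC.1.subset_ground
  obtain ⟨f, hf⟩ := hv.exists_dual_of_isCocircuitM hCc
  have hf1 : ∀ e ∈ ({x, y, a, b} : Set α), f (v e) = 1 := fun e he =>
    ZMod.eq_one_of_ne_zero_two ((hf e (hQE he)).2 he)
  have hsum : v x + (v y + (v a + v b)) = 0 := by
    have := hv.sum_eq_zero_of_isCircuitM (C := {x, y, a, b}) (by push_cast; exact hC)
    rwa [Finset.sum_insert (by simp [hxy, hax.symm, hbx.symm]),
      Finset.sum_insert (by simp [hay.symm, hby.symm]), Finset.sum_pair hab] at this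
  have hfxy : f (v x + v y) = 0 := by
    rw [map_add, hf1 x (by simp), hf1 y (by simp), ZModModule.add_self]
  refine hv.isAutomorphism_of_linearEquiv (LinearEquiv.transvection hfxy) ?_ fun e he => ?_
  · rw [Equiv.Perm.coe_mul, image_comp,
      (Equiv.swap_bijOn_self (iff_of_true (hQE (by simp)) (hQE (by simp)))).image_eq,
      (Equiv.swap_bijOn_self (iff_of_true (hQE (by simp)) (hQE (by simp)))).image_eq]
  rw [LinearEquiv.transvection.apply]
  by_cases heQ : e ∈ ({x, y, a, b} : Set α)
  · rw [hf1 e heQ, one_smul, Equiv.Perm.mul_apply]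
    rcases heQ with rfl | rfl | rfl | rfl
    · rw [Equiv.swap_apply_left, Equiv.swap_apply_of_ne_of_ne hay.symm hby.symm, ← add_assoc,
        ZModModule.add_self, zero_add]
    · rw [Equiv.swap_apply_right, Equiv.swap_apply_of_ne_of_ne hax.symm hbx.symm, add_comm (v _),
        add_assoc, ZModModule.add_self, add_zero]
    · rw [Equiv.swap_apply_of_ne_of_ne hax hay, Equiv.swap_apply_left, eq_comm, ← sub_eq_zero,
        ZModModule.sub_eq_add, ← hsum]
      abel
    · rw [Equiv.swap_apply_of_ne_of_ne hbx hby, Equiv.swap_apply_right, eq_comm, ← sub_eq_zero,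
        ZModModule.sub_eq_add, ← hsum]
      abel
  · have hfe : f (v e) = 0 := not_ne_iff.1 fun hfe => heQ ((hf e he).1 hfe)
    simp only [mem_insert_iff, mem_singleton_iff, not_or] at heQ
    rw [hfe, zero_smul, add_zero, Equiv.Perm.mul_apply, Equiv.swap_apply_of_ne_of_ne heQ.1 heQ.2.1,
      Equiv.swap_apply_of_ne_of_ne heQ.2.2.1 heQ.2.2.2]

end IsRep

end Matroid

/-- deleting any two elements of a quad of a binary matroid gives
isomorphic matroids. -/
theorem statement_5 {α : Type u} (M : Matroid α) (hMbin : M.IsBinary)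
    (Q : Set α) (hQ : M.IsQuad Q) (x y : α) (hx : x ∈ Q) (hy : y ∈ Q) :
    (M.Del {x}).IsIsoTo (M.Del {y}) := by
  classical
  obtain ⟨ι, v, hv⟩ := hMbin
  obtain rfl | hxy := eq_or_ne x y
  · exact IsIsoTo.refl _
  obtain ⟨a, b, hab, hax, hay, hbx, hby, rfl⟩ :=
    Set.exists_eq_insert_insert_pair_of_encard_eq_four hQ.2.2 hx hy hxy
  have hσ : M.IsAutomorphism (Equiv.swap a b * Equiv.swap x y) :=
    IsRep.isAutomorphism_swap_mul_swap_of_isQuad (v := v) hv hQ hxy hab hax hay hbx hby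
  have hiso := hσ.isIsoTo_del {x}
  rwa [image_singleton, Equiv.Perm.mul_apply, Equiv.swap_apply_left,
    Equiv.swap_apply_of_ne_of_ne hay.symm hby.symm] at hiso
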